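/- arXiv:2107.02205 — 2 statements merged into one kernel-verified Lean document; each statement's English description precedes it below -/
import Mathlib

section
/- With the notation of the potential-optimality definition, if j is potentially optimal witnessed by some L̃ > 0, then for every i ∈ I with δ_i = δ_j we have f_j ≤ f_i, and for every i ∈ I with δ_i > δ_j we have (f_i − f_j)/(δ_i − δ_j) ≥ L̃, while for every i with δ_i < δ_j we have (f_j − f_i)/(δ_j − δ_i) ≤ L̃. Consequently max over {i : δ_i < δ_j} of (f_j − f_i)/(δ_j − δ_i) ≤ min over {i : δ_i > δ_j} of (f_i − f_j)/(δ_i − δ_j) whenever both sets are nonempty. -/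
section Slopes

variable {𝕜 : Type*} [Field 𝕜] [LinearOrder 𝕜] [IsStrictOrderedRing 𝕜] {a b x y L : 𝕜}

theorem le_div_sub_of_sub_mul_le_sub_mul (h : a - L * x ≤ b - L * y) (hxy : x < y) :
    L ≤ (b - a) / (y - x) := by
  rw [le_div_iff₀ (sub_pos.2 hxy)]
  linarith

theorem div_sub_le_of_sub_mul_le_sub_mul (h : a - L * x ≤ b - L * y) (hyx : y < x) :
    (a - b) / (x - y) ≤ L := by
  rw [div_le_iff₀ (sub_pos.2 hyx)]
  linarith

end Slopes

theorem potentially_optimal_slopes_general {I : Type*}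
    (δ f : I → ℝ) (j : I) (L : ℝ)
    (hpo : ∀ i, f j - L * δ j ≤ f i - L * δ i) :
    (∀ i, δ i = δ j → f j ≤ f i) ∧
    (∀ i, δ j < δ i → L ≤ (f i - f j) / (δ i - δ j)) ∧
    (∀ i, δ i < δ j → (f j - f i) / (δ j - δ i) ≤ L) ∧
    (∀ i₁ i₂, δ i₁ < δ j → δ j < δ i₂ →
      (f j - f i₁) / (δ j - δ i₁) ≤ (f i₂ - f j) / (δ i₂ - δ j)) := by
  have larger i (h : δ j < δ i) := le_div_sub_of_sub_mul_le_sub_mul (hpo i) h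
  have smaller i (h : δ i < δ j) := div_sub_le_of_sub_mul_le_sub_mul (hpo i) h
  refine ⟨fun i h ↦ ?_, larger, smaller, fun i₁ i₂ h₁ h₂ ↦ (smaller i₁ h₁).trans (larger i₂ h₂)⟩
  simpa [h] using hpo i

/-- Necessary conditions for potential optimality: if `j` satisfies condition (1)
with witness `L̃ > 0`, then `f j ≤ f i` for all `i` of equal measure, the slopes
to larger rectangles are at least `L̃`, the slopes to smaller rectangles are at
most `L̃`, and consequently every slope from a smaller rectangle is at most every
slope to a larger rectangle. -/
theorem potentially_optimal_slopes {I : Type*} [Fintype I]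
    (δ f : I → ℝ) (hδ : ∀ i, 0 < δ i) (j : I) (L : ℝ) (hL : 0 < L)
    (hpo : ∀ i, f j - L * δ j ≤ f i - L * δ i) :
    (∀ i, δ i = δ j → f j ≤ f i) ∧
    (∀ i, δ j < δ i → L ≤ (f i - f j) / (δ i - δ j)) ∧
    (∀ i, δ i < δ j → (f j - f i) / (δ j - δ i) ≤ L) ∧
    (∀ i₁ i₂, δ i₁ < δ j → δ j < δ i₂ →
      (f j - f i₁) / (δ j - δ i₁) ≤ (f i₂ - f j) / (δ i₂ - δ j)) :=
  potentially_optimal_slopes_general δ f j L hpo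
end

section
/- In the PLOR selection rule, the set of selected hyper-rectangles consists of those attaining the minimal center value among rectangles of maximal measure δ_max and those attaining the minimal center value among rectangles of minimal measure δ_min. If all rectangles have the same measure (δ_max = δ_min), this set is the set of rectangles with the overall minimal center value; in general the selected set is nonempty and has at most as many elements as the partition, and every selected rectangle j of maximal measure satisfies condition (1) of the potential-optimality definition for all sufficiently large L̃. -/
/-! A rectangle `j` of maximal measure loses against a rectangle `i` only when `δ i < δ j`,
and then only for `L̃ < (f j - f i) / (δ j - δ i)`; finitely many such thresholds are
eventually exceeded. -/

open Filter

section Selection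

variable {I : Type*} (δ f : I → ℝ)

theorem eventually_sub_mul_le_sub_mul {i j : I} (hδ : δ i ≤ δ j)
    (hf : δ i = δ j → f j ≤ f i) : ∀ᶠ L in atTop, f j - L * δ j ≤ f i - L * δ i := by
  rcases hδ.eq_or_lt with heq | hlt
  · exact Eventually.of_forall fun L => by rw [heq]; linarith [hf heq]
  · have hgap : 0 < δ j - δ i := sub_pos.2 hlt
    filter_upwards [eventually_ge_atTop ((f j - f i) / (δ j - δ i))] with L hL
    nlinarith [(div_le_iff₀ hgap).1 hL]

theorem exists_pos_forall_sub_mul_le_of_forall_le [Finite I] {j : I} (hmax : ∀ i, δ i ≤ δ j)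
    (hmin : ∀ i, δ i = δ j → f j ≤ f i) :
    ∃ L0 : ℝ, 0 < L0 ∧ ∀ L : ℝ, L0 ≤ L → ∀ i, f j - L * δ j ≤ f i - L * δ i := by
  have hall : ∀ᶠ L in atTop, (∀ i, f j - L * δ j ≤ f i - L * δ i) ∧ 0 < L :=
    (eventually_all.2 fun i => eventually_sub_mul_le_sub_mul δ f (hmax i) (hmin i)).and
      (eventually_gt_atTop 0)
  obtain ⟨L0, hL0⟩ := eventually_atTop.1 hall
  exact ⟨L0, (hL0 L0 le_rfl).2, fun L hL => (hL0 L hL).1⟩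

theorem setOf_eq_and_le_of_forall_eq {d : ℝ} (hd : ∀ i, δ i = d) :
    {j | δ j = d ∧ ∀ i, δ i = d → f j ≤ f i} = {j | ∀ i, f j ≤ f i} := by
  ext j
  simp [hd]

theorem setOf_eq_and_le_nonempty [Finite I] {d : ℝ} {i₀ : I} (hi₀ : δ i₀ = d) :
    {j | δ j = d ∧ ∀ i, δ i = d → f j ≤ f i}.Nonempty := by
  have : Fintype I := Fintype.ofFinite I
  obtain ⟨j, hj, hjmin⟩ :=
    Finset.exists_min_image (Finset.univ.filter (δ · = d)) f ⟨i₀, by simp [hi₀]⟩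
  exact ⟨j, (Finset.mem_filter.1 hj).2, fun i hi => hjmin i (by simp [hi])⟩

end Selection

theorem plor_selection_general {I : Type*} [Fintype I] [Nonempty I]
    (δ f : I → ℝ)
    (dmax dmin : ℝ)
    (hdmax : dmax = Finset.univ.sup' Finset.univ_nonempty δ)
    (hdmin : dmin = Finset.univ.inf' Finset.univ_nonempty δ)
    (S : Set I)
    (hS : S = {j | δ j = dmax ∧ ∀ i, δ i = dmax → f j ≤ f i} ∪
              {j | δ j = dmin ∧ ∀ i, δ i = dmin → f j ≤ f i}) :
    ((∀ i i', δ i = δ i') → S = {j | ∀ i, f j ≤ f i}) ∧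
    S.Nonempty ∧ S.ncard ≤ Fintype.card I ∧
    (∀ j ∈ S, δ j = dmax →
      ∃ L0 : ℝ, 0 < L0 ∧ ∀ L : ℝ, L0 ≤ L →
        ∀ i, f j - L * δ j ≤ f i - L * δ i) := by
  obtain ⟨jmax, -, hjmax⟩ := Finset.exists_mem_eq_sup' Finset.univ_nonempty δ
  obtain ⟨jmin, -, hjmin⟩ := Finset.exists_mem_eq_inf' Finset.univ_nonempty δ
  have hle : ∀ i, δ i ≤ dmax := fun i => hdmax ▸ Finset.le_sup' δ (Finset.mem_univ i)
  refine ⟨fun hconst => ?_, ?_, ?_, ?_⟩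
  · rw [hS, setOf_eq_and_le_of_forall_eq δ f fun i => (hconst i jmax).trans (hdmax ▸ hjmax).symm,
      setOf_eq_and_le_of_forall_eq δ f fun i => (hconst i jmin).trans (hdmin ▸ hjmin).symm,
      Set.union_self]
  · exact hS ▸ (setOf_eq_and_le_nonempty δ f (hdmax ▸ hjmax).symm).mono Set.subset_union_left
  · exact Nat.card_eq_fintype_card (α := I) ▸ S.ncard_le_card
  · rintro j hj hjdmax
    refine exists_pos_forall_sub_mul_le_of_forall_le δ f (hjdmax ▸ hle) fun i hi => ?_
    rcases hS ▸ hj with ⟨-, hjle⟩ | ⟨hjdmin, hjle⟩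
    · exact hjle i (hi.trans hjdmax)
    · exact hjle i (hi.trans hjdmin)

/-- The PLOR selection rule: the selected set consists of the minimizers of the
center value among rectangles of maximal measure together with the minimizers
among rectangles of minimal measure.  If all measures coincide, this set is the
set of rectangles with overall minimal center value; in general it is nonempty
with at most as many elements as the partition, and every selected rectangle of
maximal measure satisfies potential-optimality condition (1) for all
sufficiently large `L̃`. -/
theorem plor_selection {I : Type*} [Fintype I] [Nonempty I]
    (δ f : I → ℝ) (hδ : ∀ i, 0 < δ i)
    (dmax dmin : ℝ)
    (hdmax : dmax = Finset.univ.sup' Finset.univ_nonempty δ)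
    (hdmin : dmin = Finset.univ.inf' Finset.univ_nonempty δ)
    (S : Set I)
    (hS : S = {j | δ j = dmax ∧ ∀ i, δ i = dmax → f j ≤ f i} ∪
              {j | δ j = dmin ∧ ∀ i, δ i = dmin → f j ≤ f i}) :
    ((∀ i i', δ i = δ i') → S = {j | ∀ i, f j ≤ f i}) ∧
    S.Nonempty ∧ S.ncard ≤ Fintype.card I ∧
    (∀ j ∈ S, δ j = dmax →
      ∃ L0 : ℝ, 0 < L0 ∧ ∀ L : ℝ, L0 ≤ L →
        ∀ i, f j - L * δ j ≤ f i - L * δ i) :=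
  plor_selection_general δ f dmax dmin hdmax hdmin S hS
end
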